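/- For fixed c > 0, let q(P̄) > 0 solve c · E_1(c/q) = P̄. Then as P̄ → ∞, c/q(P̄) → 0 and ln q(P̄) = P̄/c + ln c + γ + o(1), i.e., q(P̄) · e^{−P̄/c} → c · e^{γ} where γ is the Euler–Mascheroni constant. -/

import Mathlib

/-!
Integrating by parts against `log`,
`E₁(x) + log x = log x · (1 - e^{-x}) + ∫_x^∞ log t · e^{-t} dt`,
and as `x → 0⁺` this tends to `∫_0^∞ log t · e^{-t} dt = Γ'(1) = -γ`.
Since `E₁` is antitone and `E₁(c/q) = P̄/c → ∞`, we get `x = c/q(P̄) → 0⁺`, and then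
`q · e^{-P̄/c} = c · exp (-(E₁(x) + log x)) → c · e^γ`.
-/

open MeasureTheory Real Filter

/-- The exponential integral `E₁(x) = ∫_x^∞ e^{-t}/t dt`. -/
noncomputable def E1 (x : ℝ) : ℝ := ∫ t in Set.Ioi x, Real.exp (-t) / t

open Set Topology

lemma integrableOn_exp_neg_div_Ioi {a : ℝ} (ha : 0 < a) :
    IntegrableOn (fun t => exp (-t) / t) (Ioi a) := by
  have hpos : ∀ t ∈ Ioi a, 0 < t := fun t ht => ha.trans ht
  refine Integrable.mono' ((exp_neg_integrableOn_Ioi a one_pos).div_const a) ?_ ?_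
  · exact (ContinuousOn.div (by fun_prop) continuousOn_id fun t ht => (hpos t ht).ne')
      |>.aestronglyMeasurable measurableSet_Ioi
  · filter_upwards [ae_restrict_mem measurableSet_Ioi] with t ht
    have ht0 := hpos t ht
    rw [norm_of_nonneg (by positivity), neg_one_mul]
    gcongr
    exact ht.le

lemma E1_antitoneOn : AntitoneOn E1 (Ioi 0) := fun a ha _ _ hab =>
  setIntegral_mono_set (integrableOn_exp_neg_div_Ioi ha)
    (ae_restrict_of_forall_mem measurableSet_Ioi fun t (ht : a < t) =>
      (div_pos (exp_pos _) ((show (0:ℝ) < a from ha).trans ht)).le)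
    (Ioi_subset_Ioi hab).eventuallyLE

lemma integrableOn_log_mul_exp_neg :
    IntegrableOn (fun t => log t * exp (-t)) (Ioi 0) := by
  rw [← Ioc_union_Ioi_eq_Ioi zero_le_one]
  refine IntegrableOn.union ?_ ?_
  · have hlog : IntegrableOn log (Icc 0 1) :=
      (intervalIntegrable_iff_integrableOn_Icc_of_le zero_le_one).1
        intervalIntegral.intervalIntegrable_log'
    exact (hlog.mul_continuousOn (by fun_prop) isCompact_Icc).mono_set Ioc_subset_Icc_self
  · refine Integrable.mono' ((GammaIntegral_convergent two_pos).mono_set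
      (Ioi_subset_Ioi zero_le_one)) ?_ ?_
    · exact (continuousOn_log.mono fun t (ht : 1 < t) => (zero_lt_one.trans ht).ne').mul
        (by fun_prop) |>.aestronglyMeasurable measurableSet_Ioi
    · filter_upwards [ae_restrict_mem measurableSet_Ioi] with t (ht : 1 < t)
      rw [norm_mul, norm_of_nonneg (log_nonneg ht.le), norm_of_nonneg (exp_pos _).le, mul_comm,
        show (2:ℝ) - 1 = 1 by norm_num, rpow_one]
      exact mul_le_mul_of_nonneg_left (log_le_self (by linarith)) (exp_pos _).le

lemma integral_log_mul_exp_neg :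
    ∫ t in Ioi 0, log t * exp (-t) = -eulerMascheroniConstant := by
  have hGamma : HasDerivAt Complex.Gamma
      (∫ t : ℝ in Ioi 0, (t : ℂ) ^ ((1 : ℂ) - 1) * (log t * exp (-t))) 1 :=
    (Complex.hasDerivAt_GammaIntegral (by simp)).congr_of_eventuallyEq <| by
      filter_upwards [(isOpen_lt continuous_const Complex.continuous_re).mem_nhds
        (by simp : (0:ℝ) < (1:ℂ).re)] with s hs using Complex.Gamma_eq_integral hs
  have h := hGamma.unique Complex.hasDerivAt_Gamma_one
  simp only [sub_self, Complex.cpow_zero, one_mul, ← Complex.ofReal_mul] at h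
  exact_mod_cast h

lemma tendsto_log_mul_exp_neg_atTop : Tendsto (fun t => log t * exp (-t)) atTop (𝓝 0) := by
  refine squeeze_zero' ?_ ?_ (by simpa using tendsto_pow_mul_exp_neg_atTop_nhds_zero 1)
  · filter_upwards [eventually_ge_atTop 1] with t ht
    exact mul_nonneg (log_nonneg ht) (exp_pos _).le
  · filter_upwards [eventually_ge_atTop 1] with t ht
    exact mul_le_mul_of_nonneg_right (log_le_self (by linarith)) (exp_pos _).le

lemma E1_add_log_eq {x : ℝ} (hx : 0 < x) :
    E1 x + log x = log x * (1 - exp (-x)) + ∫ t in Ioi x, log t * exp (-t) := by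
  have hpos : ∀ t ∈ Ioi x, 0 < t := fun t ht => hx.trans ht
  have hparts := integral_Ioi_mul_deriv_eq_deriv_mul (a := x) (a' := log x * -exp (-x)) (b' := 0)
    (u := log) (u' := fun t => t⁻¹) (v := fun t => -exp (-t)) (v' := fun t => exp (-t))
    (fun t ht => hasDerivAt_log (hpos t ht).ne')
    (fun t _ => by simpa using ((hasDerivAt_neg t).exp).fun_neg)
    (integrableOn_log_mul_exp_neg.mono_set (Ioi_subset_Ioi hx.le))
    (by simpa [Pi.mul_def, div_eq_inv_mul] using (integrableOn_exp_neg_div_Ioi hx).neg)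
    (((continuousAt_log hx.ne').mul (by fun_prop)).tendsto.mono_left nhdsWithin_le_nhds)
    (by simpa [Pi.mul_def] using tendsto_log_mul_exp_neg_atTop.neg)
  simp only [mul_neg, inv_mul_eq_div, integral_neg] at hparts
  rw [hparts, E1]
  ring

lemma tendsto_log_mul_one_sub_exp_neg :
    Tendsto (fun x => log x * (1 - exp (-x))) (𝓝[>] 0) (𝓝 0) := by
  have hO : (fun x => 1 - exp (-x)) =O[𝓝[>] 0] fun x => x := by
    have h := ((hasDerivAt_neg (0:ℝ)).exp.isBigO_sub).mono (nhdsWithin_le_nhds (s := Ioi 0))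
    simp only [neg_zero, exp_zero, sub_zero] at h
    simpa only [neg_sub] using h.neg_left
  exact ((Asymptotics.isBigO_refl log _).mul hO).trans_tendsto
    (by simpa using tendsto_log_mul_rpow_nhdsGT_zero one_pos)

theorem tendsto_E1_add_log :
    Tendsto (fun x => E1 x + log x) (𝓝[>] 0) (𝓝 (-eulerMascheroniConstant)) := by
  have htail : Tendsto (fun x => ∫ t in Ioi x, log t * exp (-t)) (𝓝[>] 0)
      (𝓝 (-eulerMascheroniConstant)) :=
    integral_log_mul_exp_neg ▸
      integrableOn_log_mul_exp_neg.continuousWithinAt_Ici_primitive_Ioi.mono Ioi_subset_Ici_self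
  have hsum := tendsto_log_mul_one_sub_exp_neg.add htail
  rw [zero_add] at hsum
  refine hsum.congr' ?_
  filter_upwards [self_mem_nhdsWithin] with x hx using (E1_add_log_eq hx).symm

lemma tendsto_nhdsGT_zero_of_tendsto_E1_atTop {α : Type*} {l : Filter α} {x : α → ℝ}
    (hpos : ∀ᶠ a in l, 0 < x a) (hE1 : Tendsto (fun a => E1 (x a)) l atTop) :
    Tendsto x l (𝓝[>] 0) := by
  refine tendsto_nhdsWithin_iff.2 ⟨tendsto_order.2 ⟨fun b hb => ?_, fun ε hε => ?_⟩, hpos⟩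
  · filter_upwards [hpos] with a ha using hb.trans ha
  · filter_upwards [hpos, hE1.eventually_gt_atTop (E1 ε)] with a ha hlt
    by_contra! hle
    exact (E1_antitoneOn hε ha hle).not_gt hlt

/-- If `q(P̄) > 0` solves `c·E₁(c/q) = P̄`, then as `P̄ → ∞` we have
`c/q(P̄) → 0` and `q(P̄)·e^{−P̄/c} → c·e^{γ}`, i.e.
`ln q(P̄) = P̄/c + ln c + γ + o(1)`. -/
theorem stmt13 (c : ℝ) (hc : 0 < c) (q : ℝ → ℝ)
    (hq : ∀ Pbar : ℝ, 0 < Pbar → 0 < q Pbar ∧ c * E1 (c / q Pbar) = Pbar) :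
    Tendsto (fun Pbar : ℝ => c / q Pbar) atTop (nhds 0) ∧
    Tendsto (fun Pbar : ℝ => q Pbar * Real.exp (-(Pbar / c))) atTop
      (nhds (c * Real.exp Real.eulerMascheroniConstant)) := by
  have hsol : ∀ᶠ P in atTop, 0 < q P ∧ E1 (c / q P) = P / c := by
    filter_upwards [eventually_gt_atTop 0] with P hP
    obtain ⟨hqP, hE1⟩ := hq P hP
    exact ⟨hqP, (eq_div_iff hc.ne').2 (by rw [mul_comm, hE1])⟩
  have hx : Tendsto (fun P => c / q P) atTop (𝓝[>] 0) :=
    tendsto_nhdsGT_zero_of_tendsto_E1_atTop (hsol.mono fun P h => div_pos hc h.1)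
      ((tendsto_id.atTop_div_const hc).congr' (hsol.mono fun P h => h.2.symm))
  refine ⟨tendsto_nhds_of_tendsto_nhdsWithin hx, ?_⟩
  have hlim : Tendsto (fun P => c * exp (-(E1 (c / q P) + log (c / q P)))) atTop
      (𝓝 (c * exp eulerMascheroniConstant)) := by
    simpa only [neg_neg, Function.comp_def] using
      (tendsto_E1_add_log.comp hx).neg.rexp.const_mul c
  refine hlim.congr' ?_
  filter_upwards [hsol] with P ⟨hqP, hE1⟩
  rw [hE1, neg_add, exp_add, exp_neg (log _), exp_log (div_pos hc hqP)]
  field_simp
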